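/- Let a > 0, C_α > 0, and δ ∈ [1/4, 1/2). For ε > 0 set b = −(2 + ε)a and α(ε) = C_α ε^δ. Then as ε → 0⁺, the modulus of the non-overlapping OWR convergence factor at s = 0 with β = −α satisfies |ρ₀(0, α(ε), −α(ε))| = 1 − (4/C_α) ε^{1/2 − δ} + O(ε^{1 − 2δ}); that is, there exist constants C, ε₀ > 0 such that ||ρ₀(0, α(ε), −α(ε))| − (1 − (4/C_α) ε^{1/2 − δ})| ≤ C ε^{1 − 2δ} for all 0 < ε < ε₀. -/
import Mathlib


/-- `λ₁(0) = (2 + ε + √(4ε + ε²))/2`, the real root greater than 1 of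
`a y² + b y + a = 0` with `b = -(2 + ε)a`. -/
noncomputable def lam1Zero (ε : ℝ) : ℝ :=
  (2 + ε + Real.sqrt (4 * ε + ε ^ 2)) / 2

set_option maxHeartbeats 2000000 in
lemma core (Cα δ : ℝ) (hC : 0 < Cα) (hδ1 : 1 / 4 ≤ δ) (hδ2 : δ < 1 / 2)
    (ε : ℝ) (hε : 0 < ε) (hε1 : ε ≤ 1)
    (hxα : Real.sqrt ε ≤ Cα * ε ^ δ) (hα1 : Cα * ε ^ δ ≤ 1) :
    |((Cα * ε ^ δ + 1 - lam1Zero ε) / ((1 + Cα * ε ^ δ) * lam1Zero ε - 1)) ^ 2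
        - (1 - (4 / Cα) * ε ^ (1 / 2 - δ))| ≤ (108 / Cα ^ 2 + 8) * ε ^ (1 - 2 * δ) := by
  set x := Real.sqrt ε with hxdef
  set α := Cα * ε ^ δ with hαdef
  have hx0 : 0 < x := Real.sqrt_pos.2 hε
  have hx1 : x ≤ 1 := by
    rw [hxdef, show (1:ℝ) = Real.sqrt 1 by simp]
    exact Real.sqrt_le_sqrt hε1
  have hx2 : x ^ 2 = ε := Real.sq_sqrt hε.le
  have hα0 : 0 < α := by positivity
  -- bounds on m
  set m : ℝ := (ε + Real.sqrt (4 * ε + ε ^ 2)) / 2 with hmdef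
  have hL : lam1Zero ε = 1 + m := by rw [lam1Zero, hmdef]; ring
  have hs_lo : 2 * x ≤ Real.sqrt (4 * ε + ε ^ 2) := by
    have h1 : Real.sqrt (4 * ε) ≤ Real.sqrt (4 * ε + ε ^ 2) := by
      apply Real.sqrt_le_sqrt; nlinarith
    have h2 : Real.sqrt (4 * ε) = 2 * x := by
      rw [show (4:ℝ) * ε = 2 ^ 2 * ε by ring, Real.sqrt_mul (by positivity), Real.sqrt_sq (by norm_num)]
    linarith [h1, h2.symm.le]
  have hs_hi : Real.sqrt (4 * ε + ε ^ 2) ≤ 2 * x + ε := by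
    rw [show 2 * x + ε = Real.sqrt ((2 * x + ε) ^ 2) from (Real.sqrt_sq (by positivity)).symm]
    apply Real.sqrt_le_sqrt
    nlinarith [hx2]
  have hm1 : x ≤ m := by rw [hmdef]; nlinarith
  have hm2 : m ≤ x + x ^ 2 := by rw [hmdef]; nlinarith [hx2]
  have hm3 : m ≤ 2 * x := by nlinarith
  have hm0 : 0 < m := lt_of_lt_of_le hx0 hm1
  set D : ℝ := (1 + α) * lam1Zero ε - 1 with hDdef
  have hD : D = α + m + α * m := by rw [hDdef, hL]; ring
  have hDα : α ≤ D := by nlinarith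
  have hD0 : 0 < D := lt_of_lt_of_le hα0 hDα
  -- rewrite the rpow term
  have h4 : (4 / Cα) * ε ^ ((1:ℝ) / 2 - δ) = 4 * x / α := by
    rw [Real.rpow_sub hε, hxdef, Real.sqrt_eq_rpow, hαdef]
    have hεδ : (0:ℝ) < ε ^ δ := Real.rpow_pos_of_pos hε δ
    field_simp
  -- key identity
  have hnum : Cα * ε ^ δ + 1 - lam1Zero ε = α - m := by rw [hL]; ring
  have hD0' : α + m + α * m ≠ 0 := by positivity
  have key : ((α - m) / D) ^ 2 - (1 - 4 * x / α)
      = (4 * x * D ^ 2 - α ^ 2 * m * (2 + α) * (2 + m)) / (α * D ^ 2) := by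
    rw [hD]
    field_simp
    ring
  -- bound the numerator
  have hxm : x ^ 2 ≤ x := by nlinarith
  have hx2α : x ^ 2 ≤ x * α := by nlinarith
  have haux1 : m ^ 2 ≤ 4 * x ^ 2 := by
    nlinarith [mul_nonneg (sub_nonneg.2 hm3) (by positivity : (0:ℝ) ≤ 2 * x + m)]
  have haux2 : x ^ 3 ≤ x ^ 2 * α := by
    nlinarith [mul_le_mul_of_nonneg_left hxα (sq_nonneg x)]
  have haux4 : α ^ 2 ≤ 1 := by nlinarith
  have hNupper : 4 * x * (α + m + α * m) ^ 2 - α ^ 2 * m * (2 + α) * (2 + m)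
      ≤ 108 * x ^ 2 * α + 8 * x * α ^ 3 := by
    have g1 : 4 * x * α ^ 2 - 4 * α ^ 2 * m ≤ 0 := by nlinarith [mul_le_mul_of_nonneg_left hm1 (sq_nonneg α)]
    have g2 : 4 * x * m ^ 2 ≤ 16 * x ^ 2 * α := by
      nlinarith [mul_nonneg hx0.le (sub_nonneg.2 haux1), haux2]
    have g3 : 4 * x * α ^ 2 * m ^ 2 ≤ 16 * x ^ 2 * α := by
      nlinarith [mul_nonneg (by positivity : (0:ℝ) ≤ x * α ^ 2) (sub_nonneg.2 haux1),
        mul_nonneg (by positivity : (0:ℝ) ≤ x ^ 3) (sub_nonneg.2 haux4), haux2]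
    have g4 : 8 * x * α * m ≤ 16 * x ^ 2 * α := by
      nlinarith [mul_nonneg (by positivity : (0:ℝ) ≤ x * α) (sub_nonneg.2 hm3)]
    have g5 : 8 * x * α ^ 2 * m ≤ 16 * x ^ 2 * α := by
      nlinarith [mul_nonneg (by positivity : (0:ℝ) ≤ x * α ^ 2) (sub_nonneg.2 hm3),
        mul_nonneg (by positivity : (0:ℝ) ≤ x ^ 2 * α) (sub_nonneg.2 hα1)]
    have g6 : 8 * x * α * m ^ 2 ≤ 32 * x ^ 2 * α := by
      nlinarith [mul_nonneg (by positivity : (0:ℝ) ≤ x * α) (sub_nonneg.2 haux1),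
        mul_nonneg (by positivity : (0:ℝ) ≤ x ^ 2 * α) (sub_nonneg.2 hx1)]
    have g7 : 0 ≤ 2 * α ^ 2 * m ^ 2 := by positivity
    have g8 : 0 ≤ 2 * α ^ 3 * m := by positivity
    have g9 : 0 ≤ α ^ 3 * m ^ 2 := by positivity
    have g10 : 0 ≤ 8 * x * α ^ 3 := by positivity
    have g11 : 0 ≤ x ^ 2 * α := by positivity
    have expand : 4 * x * (α + m + α * m) ^ 2 - α ^ 2 * m * (2 + α) * (2 + m)
        = (4 * x * α ^ 2 - 4 * α ^ 2 * m) + 4 * x * m ^ 2 + 4 * x * α ^ 2 * m ^ 2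
          + 8 * x * α * m + 8 * x * α ^ 2 * m + 8 * x * α * m ^ 2
          - 2 * α ^ 2 * m ^ 2 - 2 * α ^ 3 * m - α ^ 3 * m ^ 2 := by ring
    rw [expand]
    linarith [g1, g2, g3, g4, g5, g6, g7, g8, g9, g10, g11]
  have hNlower : -(108 * x ^ 2 * α + 8 * x * α ^ 3)
      ≤ 4 * x * (α + m + α * m) ^ 2 - α ^ 2 * m * (2 + α) * (2 + m) := by
    have g1 : 4 * x * α ^ 2 - 4 * α ^ 2 * m ≥ -(4 * x ^ 2 * α) := by
      nlinarith [mul_le_mul_of_nonneg_left (by linarith : m - x ≤ x ^ 2) (sq_nonneg α),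
        mul_nonneg (by positivity : (0:ℝ) ≤ x ^ 2 * α) (sub_nonneg.2 hα1)]
    have g2 : 2 * α ^ 2 * m ^ 2 ≤ 8 * x ^ 2 * α := by
      nlinarith [mul_nonneg (sq_nonneg α) (sub_nonneg.2 haux1),
        mul_nonneg (by positivity : (0:ℝ) ≤ x ^ 2 * α) (sub_nonneg.2 hα1)]
    have g3 : 2 * α ^ 3 * m ≤ 4 * x * α ^ 3 := by
      nlinarith [mul_nonneg (by positivity : (0:ℝ) ≤ α ^ 3) (sub_nonneg.2 hm3)]
    have g4 : α ^ 3 * m ^ 2 ≤ 4 * x * α ^ 3 := by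
      nlinarith [mul_nonneg (by positivity : (0:ℝ) ≤ α ^ 3) (sub_nonneg.2 haux1),
        mul_nonneg (by positivity : (0:ℝ) ≤ α ^ 3 * x) (sub_nonneg.2 hx1)]
    have g5 : 0 ≤ 4 * x * m ^ 2 := by positivity
    have g6 : 0 ≤ 4 * x * α ^ 2 * m ^ 2 := by positivity
    have g7 : 0 ≤ 8 * x * α * m := by positivity
    have g8 : 0 ≤ 8 * x * α ^ 2 * m := by positivity
    have g9 : 0 ≤ 8 * x * α * m ^ 2 := by positivity
    have g11 : 0 ≤ x ^ 2 * α := by positivity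
    have expand : 4 * x * (α + m + α * m) ^ 2 - α ^ 2 * m * (2 + α) * (2 + m)
        = (4 * x * α ^ 2 - 4 * α ^ 2 * m) + 4 * x * m ^ 2 + 4 * x * α ^ 2 * m ^ 2
          + 8 * x * α * m + 8 * x * α ^ 2 * m + 8 * x * α * m ^ 2
          - 2 * α ^ 2 * m ^ 2 - 2 * α ^ 3 * m - α ^ 3 * m ^ 2 := by ring
    rw [expand]
    linarith [g1, g2, g3, g4, g5, g6, g7, g8, g9, g11]
  have hN : |4 * x * D ^ 2 - α ^ 2 * m * (2 + α) * (2 + m)|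
      ≤ 108 * x ^ 2 * α + 8 * x * α ^ 3 := by
    rw [hD, abs_le]
    exact ⟨hNlower, hNupper⟩
  -- put it together
  have hstep : |((α - m) / D) ^ 2 - (1 - 4 * x / α)|
      ≤ 108 * (x ^ 2 / α ^ 2) + 8 * x := by
    rw [key, abs_div, abs_of_pos (by positivity : (0:ℝ) < α * D ^ 2)]
    calc |4 * x * D ^ 2 - α ^ 2 * m * (2 + α) * (2 + m)| / (α * D ^ 2)
        ≤ (108 * x ^ 2 * α + 8 * x * α ^ 3) / (α * α ^ 2) := by
          apply div_le_div₀ (by positivity) hN (by positivity)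
          nlinarith [mul_le_mul_of_nonneg_left (mul_self_le_mul_self hα0.le hDα) hα0.le]
      _ = 108 * (x ^ 2 / α ^ 2) + 8 * x := by field_simp
  -- convert to rpow bounds
  have hα2 : α ^ 2 = Cα ^ 2 * ε ^ (2 * δ) := by
    rw [hαdef, mul_pow, ← Real.rpow_natCast (ε ^ δ) 2, ← Real.rpow_mul hε.le]
    norm_num [mul_comm]
  have e2 : ε ^ (1 - 2 * δ) = ε / ε ^ (2 * δ) := by
    rw [Real.rpow_sub hε, Real.rpow_one]
  have e1 : x ^ 2 / α ^ 2 = ε ^ (1 - 2 * δ) / Cα ^ 2 := by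
    rw [hα2, hx2, e2]
    have : (0:ℝ) < ε ^ (2 * δ) := Real.rpow_pos_of_pos hε _
    field_simp
  have e3 : x ≤ ε ^ (1 - 2 * δ) := by
    rw [hxdef, Real.sqrt_eq_rpow]
    exact Real.rpow_le_rpow_of_exponent_ge hε hε1 (by linarith)
  have hfin : 108 * (x ^ 2 / α ^ 2) + 8 * x ≤ (108 / Cα ^ 2 + 8) * ε ^ (1 - 2 * δ) := by
    rw [e1]
    have h8 : 8 * x ≤ 8 * ε ^ (1 - 2 * δ) := by linarith
    have : 108 * (ε ^ (1 - 2 * δ) / Cα ^ 2) = 108 / Cα ^ 2 * ε ^ (1 - 2 * δ) := by ring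
    linarith [this.le, this.ge]
  calc |((Cα * ε ^ δ + 1 - lam1Zero ε) / D) ^ 2 - (1 - 4 / Cα * ε ^ (1 / 2 - δ))|
      = |((α - m) / D) ^ 2 - (1 - 4 * x / α)| := by rw [hnum, h4]
    _ ≤ 108 * (x ^ 2 / α ^ 2) + 8 * x := hstep
    _ ≤ (108 / Cα ^ 2 + 8) * ε ^ (1 - 2 * δ) := hfin


lemma rpow_tendsto (δ : ℝ) (hδ : 0 < δ) :
    Filter.Tendsto (fun ε : ℝ => ε ^ δ) (nhdsWithin 0 (Set.Ioi 0)) (nhds 0) := by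
  have h := (Real.continuousAt_rpow_const 0 δ (Or.inr hδ.le)).tendsto
  rw [Real.zero_rpow hδ.ne'] at h
  exact h.mono_left nhdsWithin_le_nhds


/-- For `a > 0`, `C_α > 0` and `δ ∈ [1/4, 1/2)`, with `b = -(2 + ε)a` and
`α(ε) = C_α ε^δ`, the modulus of the non-overlapping OWR convergence factor at `s = 0`
with `β = -α`, namely `|ρ₀(0,α,-α)| = ((α+1-λ₁(0))/((1+α)λ₁(0)-1))²`, satisfies
`|ρ₀(0, α(ε), -α(ε))| = 1 - (4/C_α) ε^{1/2-δ} + O(ε^{1-2δ})` as `ε → 0⁺`. -/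
theorem rho0_at_zero_asymptotics (a Cα δ : ℝ) (ha : 0 < a) (hC : 0 < Cα)
    (hδ1 : 1 / 4 ≤ δ) (hδ2 : δ < 1 / 2) :
    ∃ C > (0 : ℝ), ∃ ε₀ > (0 : ℝ), ∀ ε : ℝ, 0 < ε → ε < ε₀ →
      |((Cα * ε ^ δ + 1 - lam1Zero ε) / ((1 + Cα * ε ^ δ) * lam1Zero ε - 1)) ^ 2
        - (1 - (4 / Cα) * ε ^ (1 / 2 - δ))| ≤ C * ε ^ (1 - 2 * δ) := by
  refine ⟨108 / Cα ^ 2 + 8, by positivity, ?_⟩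
  have hδ0 : 0 < δ := by linarith
  have t1 := (rpow_tendsto (1 / 2 - δ) (by linarith)).eventually_lt_const hC
  have t2 := (rpow_tendsto δ hδ0).eventually_lt_const (by positivity : (0:ℝ) < 1 / Cα)
  have t3 : ∀ᶠ ε : ℝ in nhdsWithin 0 (Set.Ioi 0), ε < 1 :=
    Filter.Tendsto.eventually_lt_const one_pos
      ((Filter.tendsto_id.mono_left nhdsWithin_le_nhds))
  have tall := (t1.and t2).and t3
  rw [Filter.eventually_iff, mem_nhdsGT_iff_exists_Ioo_subset] at tall
  obtain ⟨u, hu, hsub⟩ := tall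
  refine ⟨u, hu, fun ε hε hεu => ?_⟩
  obtain ⟨⟨h1, h2⟩, h3⟩ := hsub ⟨hε, hεu⟩
  have hxα : Real.sqrt ε ≤ Cα * ε ^ δ := by
    have hs : Real.sqrt ε = ε ^ ((1:ℝ) / 2 - δ) * ε ^ δ := by
      rw [Real.sqrt_eq_rpow, ← Real.rpow_add hε]; ring_nf
    rw [hs]
    exact mul_le_mul_of_nonneg_right h1.le (Real.rpow_nonneg hε.le δ)
  have hα1 : Cα * ε ^ δ ≤ 1 := by
    rw [show (1:ℝ) = Cα * (1 / Cα) by field_simp]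
    exact mul_le_mul_of_nonneg_left h2.le hC.le
  exact core Cα δ hC hδ1 hδ2 ε hε h3.le hxα hα1
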